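/- Reductive subtyping distributes pairs over unions on the left component: for all MiniJl types τ11, τ12, τ2, it holds that (τ11 ∪ τ12) × τ2 ≤r (τ11 × τ2) ∪ (τ12 × τ2). -/
import Mathlib


/-- MiniJl types -/
inductive Ty : Type
  | pair : Ty → Ty → Ty
  | union : Ty → Ty → Ty
  | int : Ty
  | flt : Ty
  | cmplx : Ty
  | str : Ty
  | real : Ty
  | num : Ty
deriving DecidableEq

/-- Value types: concrete nominal types and pairs of value types. -/
inductive ValTy : Ty → Prop
  | int : ValTy .int
  | flt : ValTy .flt
  | cmplx : ValTy .cmplx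
  | str : ValTy .str
  | pair {v1 v2 : Ty} : ValTy v1 → ValTy v2 → ValTy (.pair v1 v2)

/-- Matching relation `v ⋖ τ`. -/
inductive Matches : Ty → Ty → Prop
  | int : Matches .int .int
  | flt : Matches .flt .flt
  | cmplx : Matches .cmplx .cmplx
  | str : Matches .str .str
  | intReal : Matches .int .real
  | fltReal : Matches .flt .real
  | intNum : Matches .int .num
  | fltNum : Matches .flt .num
  | cmplxNum : Matches .cmplx .num
  | pair {v1 v2 t1 t2 : Ty} : Matches v1 t1 → Matches v2 t2 →
      Matches (.pair v1 v2) (.pair t1 t2)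
  | unionL {v t1 t2 : Ty} : Matches v t1 → Matches v (.union t1 t2)
  | unionR {v t1 t2 : Ty} : Matches v t2 → Matches v (.union t1 t2)

/-- Matching-based semantic subtyping. -/
def SemSub (t1 t2 : Ty) : Prop :=
  ∀ v : Ty, ValTy v → Matches v t1 → Matches v t2

/-- Tag interpretation of types as sets of value types. -/
def interp : Ty → Set Ty
  | .int => {.int}
  | .flt => {.flt}
  | .cmplx => {.cmplx}
  | .str => {.str}
  | .real => {.int, .flt}
  | .num => {.int, .flt, .cmplx}
  | .pair t1 t2 => {v | ∃ v1 ∈ interp t1, ∃ v2 ∈ interp t2, v = .pair v1 v2}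
  | .union t1 t2 => interp t1 ∪ interp t2

/-- Declarative subtyping. -/
inductive DeclSub : Ty → Ty → Prop
  | refl (t : Ty) : DeclSub t t
  | trans {t1 t2 t3 : Ty} : DeclSub t1 t2 → DeclSub t2 t3 → DeclSub t1 t3
  | intReal : DeclSub .int .real
  | fltReal : DeclSub .flt .real
  | realNum : DeclSub .real .num
  | cmplxNum : DeclSub .cmplx .num
  | realUnion : DeclSub .real (.union .int .flt)
  | numUnion : DeclSub .num (.union .real .cmplx)
  | pair {t1 t2 t1' t2' : Ty} : DeclSub t1 t1' → DeclSub t2 t2' →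
      DeclSub (.pair t1 t2) (.pair t1' t2')
  | unionL {t1 t2 t' : Ty} : DeclSub t1 t' → DeclSub t2 t' →
      DeclSub (.union t1 t2) t'
  | unionR1 (t1 t2 : Ty) : DeclSub t1 (.union t1 t2)
  | unionR2 (t1 t2 : Ty) : DeclSub t2 (.union t1 t2)
  | distr1 (t11 t12 t2 : Ty) :
      DeclSub (.pair (.union t11 t12) t2)
        (.union (.pair t11 t2) (.pair t12 t2))
  | distr2 (t1 t21 t22 : Ty) :
      DeclSub (.pair t1 (.union t21 t22))
        (.union (.pair t1 t21) (.pair t1 t22))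

/-- Normal form predicate. -/
inductive InNF : Ty → Prop
  | val {v : Ty} : ValTy v → InNF v
  | union {t1 t2 : Ty} : InNF t1 → InNF t2 → InNF (.union t1 t2)

/-- Union of pairs -/
def unprs : Ty → Ty → Ty
  | .union t11 t12, t2 => .union (unprs t11 t2) (unprs t12 t2)
  | t1, .union t21 t22 => .union (unprs t1 t21) (unprs t1 t22)
  | t1, t2 => .pair t1 t2

/-- Normalization function. -/
def NF : Ty → Ty
  | .int => .int
  | .flt => .flt
  | .cmplx => .cmplx
  | .str => .str
  | .real => .union .int .flt
  | .num => .union (.union .int .flt) .cmplx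
  | .pair t1 t2 => unprs (NF t1) (NF t2)
  | .union t1 t2 => .union (NF t1) (NF t2)

/-- Reductive subtyping. -/
inductive RedSub : Ty → Ty → Prop
  | intRefl : RedSub .int .int
  | fltRefl : RedSub .flt .flt
  | cmplxRefl : RedSub .cmplx .cmplx
  | strRefl : RedSub .str .str
  | intReal : RedSub .int .real
  | fltReal : RedSub .flt .real
  | cmplxNum : RedSub .cmplx .num
  | intNum : RedSub .int .num
  | fltNum : RedSub .flt .num
  | pair {t1 t2 t1' t2' : Ty} : RedSub t1 t1' → RedSub t2 t2' →
      RedSub (.pair t1 t2) (.pair t1' t2')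
  | unionL {t1 t2 t' : Ty} : RedSub t1 t' → RedSub t2 t' →
      RedSub (.union t1 t2) t'
  | unionR1 {t t1' t2' : Ty} : RedSub t t1' → RedSub t (.union t1' t2')
  | unionR2 {t t1' t2' : Ty} : RedSub t t2' → RedSub t (.union t1' t2')
  | nf {t t' : Ty} : RedSub (NF t) t' → RedSub t t'

theorem redSub_union_inv : ∀ {s t : Ty}, RedSub s t → ∀ a b, s = .union a b →
    RedSub a t ∧ RedSub b t := by
  intro s t h
  induction h with
  | unionL h1 h2 => intro a b heq; cases heq; exact ⟨h1, h2⟩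
  | unionR1 h ih =>
      intro a b heq
      obtain ⟨ha, hb⟩ := ih a b heq
      exact ⟨.unionR1 ha, .unionR1 hb⟩
  | unionR2 h ih =>
      intro a b heq
      obtain ⟨ha, hb⟩ := ih a b heq
      exact ⟨.unionR2 ha, .unionR2 hb⟩
  | nf h ih =>
      intro a b heq
      cases heq
      obtain ⟨ha, hb⟩ := ih (NF a) (NF b) rfl
      exact ⟨.nf ha, .nf hb⟩
  | _ => intro a b heq; cases heq

theorem unprs_sub : ∀ (a b : Ty) {t1 t2 : Ty}, RedSub a t1 → RedSub b t2 →
    RedSub (unprs a b) (.pair t1 t2)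
  | .union a1 a2, b, t1, t2, ha, hb => by
      obtain ⟨h1, h2⟩ := redSub_union_inv ha a1 a2 rfl
      simp only [unprs]
      exact .unionL (unprs_sub a1 b h1 hb) (unprs_sub a2 b h2 hb)
  | .int, .union b1 b2, t1, t2, ha, hb => by
      obtain ⟨h1, h2⟩ := redSub_union_inv hb b1 b2 rfl
      simp only [unprs]
      exact .unionL (unprs_sub .int b1 ha h1) (unprs_sub .int b2 ha h2)
  | .flt, .union b1 b2, t1, t2, ha, hb => by
      obtain ⟨h1, h2⟩ := redSub_union_inv hb b1 b2 rfl
      simp only [unprs]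
      exact .unionL (unprs_sub .flt b1 ha h1) (unprs_sub .flt b2 ha h2)
  | .cmplx, .union b1 b2, t1, t2, ha, hb => by
      obtain ⟨h1, h2⟩ := redSub_union_inv hb b1 b2 rfl
      simp only [unprs]
      exact .unionL (unprs_sub .cmplx b1 ha h1) (unprs_sub .cmplx b2 ha h2)
  | .str, .union b1 b2, t1, t2, ha, hb => by
      obtain ⟨h1, h2⟩ := redSub_union_inv hb b1 b2 rfl
      simp only [unprs]
      exact .unionL (unprs_sub .str b1 ha h1) (unprs_sub .str b2 ha h2)
  | .real, .union b1 b2, t1, t2, ha, hb => by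
      obtain ⟨h1, h2⟩ := redSub_union_inv hb b1 b2 rfl
      simp only [unprs]
      exact .unionL (unprs_sub .real b1 ha h1) (unprs_sub .real b2 ha h2)
  | .num, .union b1 b2, t1, t2, ha, hb => by
      obtain ⟨h1, h2⟩ := redSub_union_inv hb b1 b2 rfl
      simp only [unprs]
      exact .unionL (unprs_sub .num b1 ha h1) (unprs_sub .num b2 ha h2)
  | .pair a1 a2, .union b1 b2, t1, t2, ha, hb => by
      obtain ⟨h1, h2⟩ := redSub_union_inv hb b1 b2 rfl
      simp only [unprs]
      exact .unionL (unprs_sub (.pair a1 a2) b1 ha h1)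
        (unprs_sub (.pair a1 a2) b2 ha h2)
  | .int, .int, _, _, ha, hb => by simp only [unprs]; exact .pair ha hb
  | .int, .flt, _, _, ha, hb => by simp only [unprs]; exact .pair ha hb
  | .int, .cmplx, _, _, ha, hb => by simp only [unprs]; exact .pair ha hb
  | .int, .str, _, _, ha, hb => by simp only [unprs]; exact .pair ha hb
  | .int, .real, _, _, ha, hb => by simp only [unprs]; exact .pair ha hb
  | .int, .num, _, _, ha, hb => by simp only [unprs]; exact .pair ha hb
  | .int, .pair _ _, _, _, ha, hb => by simp only [unprs]; exact .pair ha hb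
  | .flt, .int, _, _, ha, hb => by simp only [unprs]; exact .pair ha hb
  | .flt, .flt, _, _, ha, hb => by simp only [unprs]; exact .pair ha hb
  | .flt, .cmplx, _, _, ha, hb => by simp only [unprs]; exact .pair ha hb
  | .flt, .str, _, _, ha, hb => by simp only [unprs]; exact .pair ha hb
  | .flt, .real, _, _, ha, hb => by simp only [unprs]; exact .pair ha hb
  | .flt, .num, _, _, ha, hb => by simp only [unprs]; exact .pair ha hb
  | .flt, .pair _ _, _, _, ha, hb => by simp only [unprs]; exact .pair ha hb
  | .cmplx, .int, _, _, ha, hb => by simp only [unprs]; exact .pair ha hb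
  | .cmplx, .flt, _, _, ha, hb => by simp only [unprs]; exact .pair ha hb
  | .cmplx, .cmplx, _, _, ha, hb => by simp only [unprs]; exact .pair ha hb
  | .cmplx, .str, _, _, ha, hb => by simp only [unprs]; exact .pair ha hb
  | .cmplx, .real, _, _, ha, hb => by simp only [unprs]; exact .pair ha hb
  | .cmplx, .num, _, _, ha, hb => by simp only [unprs]; exact .pair ha hb
  | .cmplx, .pair _ _, _, _, ha, hb => by simp only [unprs]; exact .pair ha hb
  | .str, .int, _, _, ha, hb => by simp only [unprs]; exact .pair ha hb
  | .str, .flt, _, _, ha, hb => by simp only [unprs]; exact .pair ha hb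
  | .str, .cmplx, _, _, ha, hb => by simp only [unprs]; exact .pair ha hb
  | .str, .str, _, _, ha, hb => by simp only [unprs]; exact .pair ha hb
  | .str, .real, _, _, ha, hb => by simp only [unprs]; exact .pair ha hb
  | .str, .num, _, _, ha, hb => by simp only [unprs]; exact .pair ha hb
  | .str, .pair _ _, _, _, ha, hb => by simp only [unprs]; exact .pair ha hb
  | .real, .int, _, _, ha, hb => by simp only [unprs]; exact .pair ha hb
  | .real, .flt, _, _, ha, hb => by simp only [unprs]; exact .pair ha hb
  | .real, .cmplx, _, _, ha, hb => by simp only [unprs]; exact .pair ha hb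
  | .real, .str, _, _, ha, hb => by simp only [unprs]; exact .pair ha hb
  | .real, .real, _, _, ha, hb => by simp only [unprs]; exact .pair ha hb
  | .real, .num, _, _, ha, hb => by simp only [unprs]; exact .pair ha hb
  | .real, .pair _ _, _, _, ha, hb => by simp only [unprs]; exact .pair ha hb
  | .num, .int, _, _, ha, hb => by simp only [unprs]; exact .pair ha hb
  | .num, .flt, _, _, ha, hb => by simp only [unprs]; exact .pair ha hb
  | .num, .cmplx, _, _, ha, hb => by simp only [unprs]; exact .pair ha hb
  | .num, .str, _, _, ha, hb => by simp only [unprs]; exact .pair ha hb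
  | .num, .real, _, _, ha, hb => by simp only [unprs]; exact .pair ha hb
  | .num, .num, _, _, ha, hb => by simp only [unprs]; exact .pair ha hb
  | .num, .pair _ _, _, _, ha, hb => by simp only [unprs]; exact .pair ha hb
  | .pair _ _, .int, _, _, ha, hb => by simp only [unprs]; exact .pair ha hb
  | .pair _ _, .flt, _, _, ha, hb => by simp only [unprs]; exact .pair ha hb
  | .pair _ _, .cmplx, _, _, ha, hb => by simp only [unprs]; exact .pair ha hb
  | .pair _ _, .str, _, _, ha, hb => by simp only [unprs]; exact .pair ha hb
  | .pair _ _, .real, _, _, ha, hb => by simp only [unprs]; exact .pair ha hb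
  | .pair _ _, .num, _, _, ha, hb => by simp only [unprs]; exact .pair ha hb
  | .pair _ _, .pair _ _, _, _, ha, hb => by simp only [unprs]; exact .pair ha hb

theorem nf_sub : ∀ t : Ty, RedSub (NF t) t
  | .int => .intRefl
  | .flt => .fltRefl
  | .cmplx => .cmplxRefl
  | .str => .strRefl
  | .real => .unionL .intReal .fltReal
  | .num => .unionL (.unionL .intNum .fltNum) .cmplxNum
  | .union t1 t2 => .unionL (.unionR1 (nf_sub t1)) (.unionR2 (nf_sub t2))
  | .pair t1 t2 => unprs_sub (NF t1) (NF t2) (nf_sub t1) (nf_sub t2)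

theorem redSub_distr1 (t11 t12 t2 : Ty) :
    RedSub (.pair (.union t11 t12) t2) (.union (.pair t11 t2) (.pair t12 t2)) := by
  apply RedSub.nf
  show RedSub (unprs (.union (NF t11) (NF t12)) (NF t2)) _
  rw [unprs]
  exact .unionL (.unionR1 (unprs_sub _ _ (nf_sub t11) (nf_sub t2)))
    (.unionR2 (unprs_sub _ _ (nf_sub t12) (nf_sub t2)))
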